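/- Let q be a positive integer, ξ = e^{-iπ/q}, and η(z) = (z+1)/(z-1). Define Q(m) = (1 - ξ^m)·(1 + Σ_{k=1}^{q-1} (-1)^k ξ^{km} ∏_{j=1}^{k} η(ξ^j)). Then Q(m) = 0 for all m with 0 ≤ m ≤ q-1. -/

import Mathlib

open Complex Finset

/-!
With `a k = ∏_{j=1}^k (1 + ξ^j)/(1 - ξ^j) = (-1)^k ∏_{j=1}^k η(ξ^j)`, the bracket is `F(ξ^m)` for
`F x = ∑_{k<q} a k x^k`. The recursion `a (k+1) (1 - ξ^(k+1)) = a k (1 + ξ^(k+1))`, together with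
`a q = 0` (because `ξ^q = -1`), telescopes to the functional equation
`(1 - x) F x = (1 + ξ x) F (ξ x)`. Descending from `k = q - 1`, where `1 + ξ^q = 0`, it gives
`(1 - ξ^k) F(ξ^k) = 0`, hence `F(ξ^k) = 0` for `0 < k < q`; for `m = 0` the factor `1 - ξ^0` vanishes.
-/

theorem IsPrimitiveRoot.pow_eq_neg_one_of_two_mul {R : Type*} [CommRing R] [NoZeroDivisors R]
    {ζ : R} {n : ℕ} (h : IsPrimitiveRoot ζ (2 * n)) (hn : n ≠ 0) : ζ ^ n = -1 :=
  (Nat.mul_div_cancel 2 (Nat.pos_of_ne_zero hn) ▸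
    h.pow_of_dvd hn (dvd_mul_left n 2)).eq_neg_one_of_two_right

section LewyPolynomial

variable {K : Type*} [Field K] {ξ : K} {q : ℕ}

def lewyCoeff (ξ : K) (k : ℕ) : K := ∏ j ∈ Icc 1 k, (1 + ξ ^ j) / (1 - ξ ^ j)

def lewyPoly (ξ : K) (q : ℕ) (x : K) : K := ∑ k ∈ range q, lewyCoeff ξ k * x ^ k

lemma lewyCoeff_succ_mul {k : ℕ} (h : ξ ^ (k + 1) ≠ 1) :
    lewyCoeff ξ (k + 1) * (1 - ξ ^ (k + 1)) = lewyCoeff ξ k * (1 + ξ ^ (k + 1)) := by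
  rw [lewyCoeff, prod_Icc_succ_top (by omega), ← lewyCoeff, mul_assoc,
    div_mul_cancel₀ _ (sub_ne_zero.2 h.symm)]

lemma lewyCoeff_eq_neg_one_pow_mul_prod (ξ : K) (k : ℕ) :
    lewyCoeff ξ k = (-1) ^ k * ∏ j ∈ Icc 1 k, (ξ ^ j + 1) / (ξ ^ j - 1) := by
  have hsign : (-1 : K) ^ k = ∏ _j ∈ Icc 1 k, (-1 : K) := by simp
  rw [lewyCoeff, hsign, ← prod_mul_distrib]
  refine prod_congr rfl fun j _ => ?_
  rw [← neg_sub, div_neg, add_comm]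
  ring

lemma lewyCoeff_eq_zero_of_pow_eq_neg_one (h : ξ ^ q = -1) (hq : q ≠ 0) : lewyCoeff ξ q = 0 :=
  prod_eq_zero (mem_Icc.2 ⟨Nat.one_le_iff_ne_zero.2 hq, le_rfl⟩) (by simp [h])

theorem lewyPoly_functional_eq (hξ : IsPrimitiveRoot ξ (2 * q)) (hq : q ≠ 0) (x : K) :
    (1 - x) * lewyPoly ξ q x = (1 + ξ * x) * lewyPoly ξ q (ξ * x) := by
  set b : ℕ → K := fun k => lewyCoeff ξ k * (1 - ξ ^ k) * x ^ k
  have hb : ∀ k < q, lewyCoeff ξ k * (1 + ξ ^ (k + 1)) * x ^ (k + 1) = b (k + 1) := fun k hk => by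
    rw [← lewyCoeff_succ_mul (hξ.pow_ne_one_of_pos_of_lt k.succ_ne_zero (by omega))]
  rw [← sub_eq_zero]
  calc (1 - x) * lewyPoly ξ q x - (1 + ξ * x) * lewyPoly ξ q (ξ * x)
      = ∑ k ∈ range q, (b k - b (k + 1)) := by
        rw [lewyPoly, lewyPoly, mul_sum, mul_sum, ← sum_sub_distrib]
        refine sum_congr rfl fun k hk => ?_
        rw [← hb k (mem_range.1 hk)]
        ring
    _ = b 0 - b q := sum_range_sub' b q
    _ = 0 := by
        simp [b, lewyCoeff_eq_zero_of_pow_eq_neg_one (hξ.pow_eq_neg_one_of_two_mul hq) hq]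

theorem lewyPoly_pow_eq_zero (hξ : IsPrimitiveRoot ξ (2 * q)) {k : ℕ} (hk0 : k ≠ 0) (hkq : k < q) :
    lewyPoly ξ q (ξ ^ k) = 0 := by
  induction hkq.le using Nat.decreasingInduction with
  | self => exact absurd hkq (lt_irrefl q)
  | of_succ k hk ih =>
    have hstep := lewyPoly_functional_eq hξ (by omega) (ξ ^ k)
    rw [← pow_succ'] at hstep
    have hnext : (1 + ξ ^ (k + 1)) * lewyPoly ξ q (ξ ^ (k + 1)) = 0 := by
      rcases (show k + 1 ≤ q from hk).eq_or_lt with hlast | hlt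
      · rw [hlast, hξ.pow_eq_neg_one_of_two_mul (by omega), add_neg_cancel, zero_mul]
      · rw [ih k.succ_ne_zero hlt, mul_zero]
    have hne : 1 - ξ ^ k ≠ 0 := sub_ne_zero.2 (hξ.pow_ne_one_of_pos_of_lt hk0 (by omega)).symm
    exact (mul_eq_zero.1 (hstep.trans hnext)).resolve_left hne

theorem one_sub_pow_mul_lewyPoly_pow_eq_zero (hξ : IsPrimitiveRoot ξ (2 * q)) {m : ℕ}
    (hm : m < q) : (1 - ξ ^ m) * lewyPoly ξ q (ξ ^ m) = 0 := by
  rcases eq_or_ne m 0 with rfl | hm0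
  · simp
  · rw [lewyPoly_pow_eq_zero hξ hm0 hm, mul_zero]

end LewyPolynomial

theorem Complex.isPrimitiveRoot_exp_neg_pi_mul_I_div {q : ℕ} (hq : q ≠ 0) :
    IsPrimitiveRoot (exp (-(Real.pi * I) / q)) (2 * q) := by
  have h := (Complex.isPrimitiveRoot_exp (2 * q) (by omega)).inv
  rwa [← exp_neg, show -(2 * Real.pi * I / (2 * q : ℕ)) = -(Real.pi * I) / q by
    push_cast; field_simp] at h

/-- Lewy's lemma, Dirichlet case: with `ξ = e^{-iπ/q}`, `η(z) = (z+1)/(z-1)`,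
the quantity `Q(m) = (1 - ξ^m)(1 + Σ_{k=1}^{q-1} (-1)^k ξ^{km} ∏_{j=1}^k η(ξ^j))`
vanishes for all `0 ≤ m ≤ q-1`. -/
theorem lewy_vanishing_dirichlet (q : ℕ) (hq : 1 ≤ q)
    (ξ : ℂ) (hξ : ξ = Complex.exp (-(Real.pi * Complex.I) / q))
    (η : ℂ → ℂ) (hη : ∀ z, η z = (z + 1) / (z - 1))
    (m : ℕ) (hm : m ≤ q - 1) :
    (1 - ξ ^ m) *
        (1 + ∑ k ∈ Finset.Icc 1 (q - 1),
            (-1 : ℂ) ^ k * ξ ^ (k * m) * ∏ j ∈ Finset.Icc 1 k, η (ξ ^ j)) = 0 := by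
  have hprim : IsPrimitiveRoot ξ (2 * q) := hξ ▸ isPrimitiveRoot_exp_neg_pi_mul_I_div (by omega)
  convert one_sub_pow_mul_lewyPoly_pow_eq_zero hprim (m := m) (by omega) using 2
  obtain ⟨n, rfl⟩ : ∃ n, q = n + 1 := ⟨q - 1, by omega⟩
  rw [lewyPoly, sum_range_eq_add_Ico _ n.succ_pos, Nat.add_sub_cancel, ← Ico_add_one_right_eq_Icc]
  congr 1
  · simp [lewyCoeff]
  · refine sum_congr rfl fun k _ => ?_
    simp only [hη, lewyCoeff_eq_neg_one_pow_mul_prod, ← pow_mul, mul_comm m k]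
    ring
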